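/- arXiv:2306.05684 — 10 statements merged into one kernel-verified Lean document; each statement's English description precedes it below -/
import Mathlib

section
/- Let G = (V, H) be a finite directed graph in which every node has at most one incoming edge, and let h ≥ 1 be an integer. Then there exists a subset V(h) ⊆ V such that (i) |V(h)| ≤ |V| / h, and (ii) for every v ∈ V there exists an integer i with 0 ≤ i ≤ 2h − 2 such that the i-th backward ancestor v(i) of v is defined and at least one of the following holds: v(i) ∈ V(h), or v(i) has no incoming edge, or v(i) = v(j) for some 0 ≤ j < i. -/
/-- The `i`-th backward ancestor of `v` in a directed graph where every node has
at most one incoming edge (given by the partial map `parent`). -/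
def anc {V : Type*} (parent : V → Option V) : ℕ → V → Option V
  | 0, v => some v
  | k+1, v => (anc parent k v).bind parent

lemma anc_add {V : Type*} (parent : V → Option V) (a b : ℕ) (v : V) :
    anc parent (a + b) v = (anc parent b v).bind (anc parent a) := by
  induction a with
  | zero => simp [anc]
  | succ a ih =>
      have e : a + 1 + b = (a + b) + 1 := by ring
      rw [e]
      show (anc parent (a + b) v).bind parent = _
      rw [ih, Option.bind_assoc]
      rfl

/-- The greedy step: given a sample set `S` and a set `C` of "charged" nodes with
`h * |S| ≤ |C|`, such that every charged node reaches `S` within `h - 1` steps,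
and a node `v` violating the coverage condition, we can add one node to `S`
(the `(h-1)`-st ancestor of `v`) and `h` fresh nodes to `C`
(the ancestors `v(0), …, v(h-1)`), preserving the invariants. -/
lemma sampling_step {V : Type*} [Fintype V] [DecidableEq V]
    (parent : V → Option V) (h : ℕ) (hh : 1 ≤ h) (S C : Finset V)
    (h1 : h * S.card ≤ C.card)
    (h2 : ∀ w ∈ C, ∃ m ≤ h - 1, ∃ s ∈ S, anc parent m w = some s)
    (v : V)
    (hv : ∀ i ≤ 2 * h - 2, ∀ w : V, anc parent i v = some w →
      w ∉ S ∧ ¬ parent w = none ∧ ∀ j < i, ¬ anc parent j v = some w) :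
    ∃ S' C' : Finset V, C'.card = C.card + h ∧ h * S'.card ≤ C'.card ∧
      (∀ w ∈ C', ∃ m ≤ h - 1, ∃ s ∈ S', anc parent m w = some s) := by
  -- all ancestors of `v` up to index `2h-2` are defined
  have hdef : ∀ i, i ≤ 2 * h - 2 → ∃ w, anc parent i v = some w := by
    intro i
    induction i with
    | zero => exact fun _ => ⟨v, rfl⟩
    | succ i ih2 =>
        intro hi
        obtain ⟨w, hw⟩ := ih2 (by omega)
        have hp := (hv i (by omega) w hw).2.1
        cases hpw : parent w with
        | none => exact absurd hpw hp
        | some u =>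
            refine ⟨u, ?_⟩
            show (anc parent i v).bind parent = some u
            rw [hw]
            simp [hpw]
  set g : ℕ → V := fun i => (anc parent i v).getD v with hgdef
  have hg : ∀ i, i ≤ 2 * h - 2 → anc parent i v = some (g i) := by
    intro i hi
    obtain ⟨w, hw⟩ := hdef i hi
    simp [hgdef, hw]
  -- the ancestors are pairwise distinct
  have hinj : ∀ i j, i ≤ 2 * h - 2 → j ≤ 2 * h - 2 → i < j → g i ≠ g j := by
    intro i j hi hj hij heq
    exact (hv j hj (g j) (hg j hj)).2.2 i hij (heq ▸ hg i hi)
  have hreach : ∀ i ≤ 2 * h - 2, ∀ m s, anc parent m (g i) = some s →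
      anc parent (m + i) v = some s := by
    intro i hi m s hms
    rw [anc_add, hg i hi]
    simpa using hms
  -- the newly charged nodes are fresh
  have hnotC : ∀ i < h, g i ∉ C := by
    intro i hi hiC
    obtain ⟨m, hm, s, hsS, hms⟩ := h2 (g i) hiC
    have hr : anc parent (m + i) v = some s := hreach i (by omega) m s hms
    exact (hv (m + i) (by omega) s hr).1 hsS
  set D : Finset V := (Finset.range h).image g with hD
  have hDcard : D.card = h := by
    rw [hD, Finset.card_image_of_injOn, Finset.card_range]
    intro i hi j hj heq
    simp only [Finset.coe_range, Set.mem_Iio] at hi hj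
    by_contra hne
    rcases lt_or_gt_of_ne hne with hlt | hlt
    · exact hinj i j (by omega) (by omega) hlt heq
    · exact hinj j i (by omega) (by omega) hlt heq.symm
  have hdisj : Disjoint C D := by
    rw [Finset.disjoint_right]
    intro w hwD hwC
    obtain ⟨i, hi, rfl⟩ := Finset.mem_image.1 hwD
    exact hnotC i (Finset.mem_range.1 hi) hwC
  refine ⟨insert (g (h - 1)) S, C ∪ D, ?_, ?_, ?_⟩
  · rw [Finset.card_union_of_disjoint hdisj, hDcard]
  · rw [Finset.card_union_of_disjoint hdisj, hDcard]
    have : (insert (g (h - 1)) S).card ≤ S.card + 1 := Finset.card_insert_le _ _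
    calc h * (insert (g (h - 1)) S).card ≤ h * (S.card + 1) := Nat.mul_le_mul_left h this
      _ = h * S.card + h := by ring
      _ ≤ C.card + h := by omega
  · intro w hw
    rcases Finset.mem_union.1 hw with hwC | hwD
    · obtain ⟨m, hm, s, hs, hms⟩ := h2 w hwC
      exact ⟨m, hm, s, Finset.mem_insert_of_mem hs, hms⟩
    · obtain ⟨i, hi, rfl⟩ := Finset.mem_image.1 hwD
      have hi' : i < h := Finset.mem_range.1 hi
      refine ⟨h - 1 - i, by omega, g (h - 1), Finset.mem_insert_self _ _, ?_⟩
      have e : (h - 1 - i) + i = h - 1 := by omega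
      have ha := anc_add parent (h - 1 - i) i v
      rw [e, hg i (by omega), hg (h - 1) (by omega)] at ha
      simpa using ha.symm

/-- for every finite graph with in-degree at most one and every `h ≥ 1`
there is a sample set `S` with `|S| ≤ |V|/h` such that from every node `v`, within
`2h-2` backward steps one reaches a sampled node, a node with no incoming edge,
or a previously visited ancestor. -/
theorem sampling_set_exists {V : Type*} [Fintype V] [DecidableEq V]
    (parent : V → Option V) (h : ℕ) (hh : 1 ≤ h) :
    ∃ S : Finset V, S.card ≤ Fintype.card V / h ∧
      ∀ v : V, ∃ i ≤ 2 * h - 2, ∃ w : V, anc parent i v = some w ∧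
        (w ∈ S ∨ parent w = none ∨ ∃ j < i, anc parent j v = some w) := by
  suffices haux : ∀ (k : ℕ) (S C : Finset V),
      h * S.card ≤ C.card →
      (∀ w ∈ C, ∃ m ≤ h - 1, ∃ s ∈ S, anc parent m w = some s) →
      Fintype.card V ≤ C.card + k →
      ∃ T : Finset V, T.card ≤ Fintype.card V / h ∧
        ∀ v : V, ∃ i ≤ 2 * h - 2, ∃ w : V, anc parent i v = some w ∧
          (w ∈ T ∨ parent w = none ∨ ∃ j < i, anc parent j v = some w) by
    exact haux (Fintype.card V) ∅ ∅ (by simp) (by simp) (by simp)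
  intro k
  induction k with
  | zero =>
      intro S C h1 h2 h3
      by_cases hall : ∀ v : V, ∃ i ≤ 2 * h - 2, ∃ w : V, anc parent i v = some w ∧
          (w ∈ S ∨ parent w = none ∨ ∃ j < i, anc parent j v = some w)
      · refine ⟨S, ?_, hall⟩
        rw [Nat.le_div_iff_mul_le hh]
        calc S.card * h = h * S.card := mul_comm _ _
          _ ≤ C.card := h1
          _ ≤ Fintype.card V := Finset.card_le_univ C
      · push_neg at hall
        obtain ⟨v, hv⟩ := hall
        obtain ⟨S', C', hc, _, _⟩ := sampling_step parent h hh S C h1 h2 v hv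
        have := Finset.card_le_univ C'
        omega
  | succ k ih =>
      intro S C h1 h2 h3
      by_cases hall : ∀ v : V, ∃ i ≤ 2 * h - 2, ∃ w : V, anc parent i v = some w ∧
          (w ∈ S ∨ parent w = none ∨ ∃ j < i, anc parent j v = some w)
      · refine ⟨S, ?_, hall⟩
        rw [Nat.le_div_iff_mul_le hh]
        calc S.card * h = h * S.card := mul_comm _ _
          _ ≤ C.card := h1
          _ ≤ Fintype.card V := Finset.card_le_univ C
      · push_neg at hall
        obtain ⟨v, hv⟩ := hall
        obtain ⟨S', C', hc, h1', h2'⟩ := sampling_step parent h hh S C h1 h2 v hv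
        exact ih S' C' h1' h2' (by omega)
end

section
/- Let G = (V, H) be a finite directed graph in which every node has at most one incoming edge, and suppose V(h) ⊆ V is built greedily as follows: repeatedly pick a node v such that v(0), v(1), ..., v(h−1) are all defined, pairwise distinct, and none of them belongs to the marked set U; add v(h−1) to V(h) and mark all of v(0), ..., v(h−1) in U; repeat until no such v exists. Then the sets S_v = {v, v(1), ..., v(h−1)}, indexed over the nodes v whose iterate v(h−1) was added to V(h), are pairwise disjoint and each has cardinality exactly h; consequently |V(h)| ≤ |V| / h. -/
/-- if `L` is the list of nodes picked by the greedy algorithm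
(Algorithm 1): each picked node has its first `h` backward ancestors defined and
pairwise distinct, and the ancestors of a pick are disjoint from the ancestors of
all earlier picks (the marked set `U`), then the sets
`S_v = {v, v(1), …, v(h-1)}` are pairwise disjoint, each of cardinality `h`, and
consequently the resulting set `V(h) = {v(h-1) : v a pick}` has size at most `|V|/h`. -/
theorem greedy_sampling {V : Type*} [Fintype V] [DecidableEq V]
    (parent : V → Option V) (h : ℕ) (hh : 1 ≤ h) (L : List V)
    (hdef : ∀ v ∈ L, ∀ i < h, (anc parent i v).isSome)
    (hdist : ∀ v ∈ L, ∀ i < h, ∀ j < i, anc parent i v ≠ anc parent j v)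
    (hgreedy : ∀ (k k' : Fin L.length), k < k' → ∀ i < h, ∀ j < h,
      anc parent i (L.get k') ≠ anc parent j (L.get k)) :
    (∀ v ∈ L, ((Finset.range h).image (fun i => anc parent i v)).card = h) ∧
    L.Pairwise (fun v w =>
      Disjoint ((Finset.range h).image (fun i => anc parent i v))
               ((Finset.range h).image (fun i => anc parent i w))) ∧
    (L.map (fun v => anc parent (h - 1) v)).toFinset.card ≤ Fintype.card V / h := by
  set S : V → Finset (Option V) :=
    fun v => (Finset.range h).image (fun i => anc parent i v) with hS
  -- Part 1: each S v has cardinality h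
  have hcard : ∀ v ∈ L, (S v).card = h := by
    intro v hv
    rw [hS]
    rw [Finset.card_image_of_injOn, Finset.card_range]
    intro i hi j hj hij
    simp only [Finset.coe_range, Set.mem_Iio] at hi hj
    by_contra hne
    rcases lt_or_gt_of_ne hne with hlt | hlt
    · exact hdist v hv j hj i hlt hij.symm
    · exact hdist v hv i hi j hlt hij
  -- Part 2: pairwise disjoint
  have hpair : L.Pairwise (fun v w => Disjoint (S v) (S w)) := by
    rw [List.pairwise_iff_get]
    intro k k' hkk'
    rw [Finset.disjoint_left]
    intro a ha ha'
    simp only [hS, Finset.mem_image, Finset.mem_range] at ha ha'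
    obtain ⟨i, hi, hia⟩ := ha
    obtain ⟨j, hj, hja⟩ := ha'
    exact hgreedy k k' hkk' j hj i hi (hja.trans hia.symm)
  refine ⟨hcard, hpair, ?_⟩
  -- Part 3
  have hmem : ∀ v, anc parent (h - 1) v ∈ S v := by
    intro v
    exact Finset.mem_image.2 ⟨h - 1, Finset.mem_range.2 (Nat.sub_lt (by omega) one_pos), rfl⟩
  have hmapnd : (L.map (fun v => anc parent (h - 1) v)).Nodup := by
    refine hpair.map _ (fun a b hab => ?_)
    intro hEq
    exact Finset.disjoint_left.1 hab (hmem a) (hEq ▸ hmem b)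
  have hnd : L.Nodup := by
    refine (List.Pairwise.imp ?_ hpair)
    intro a b hab hEq
    exact Finset.disjoint_left.1 hab (hmem a) (hEq ▸ hmem b)
  have hlen : (L.map (fun v => anc parent (h - 1) v)).toFinset.card = L.length := by
    rw [List.toFinset_card_of_nodup hmapnd, List.length_map]
  -- bound h * L.length ≤ Fintype.card V
  have hbound : L.length * h ≤ Fintype.card V := by
    classical
    have hndF : ∀ x ∈ L.toFinset, ∀ y ∈ L.toFinset, x ≠ y → Disjoint (S x) (S y) := by
      intro x hx y hy hxy
      rw [List.mem_toFinset] at hx hy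
      haveI : Std.Symm (fun v w => Disjoint (S v) (S w)) := ⟨fun a b hab => hab.symm⟩
      exact hpair.forall hx hy hxy
    have hunion := Finset.card_biUnion hndF
    have hsub : L.toFinset.biUnion S ⊆ Finset.univ.image some := by
      intro a ha
      obtain ⟨v, hv, hva⟩ := Finset.mem_biUnion.1 ha
      rw [List.mem_toFinset] at hv
      simp only [hS, Finset.mem_image, Finset.mem_range] at hva
      obtain ⟨i, hi, hia⟩ := hva
      have := hdef v hv i hi
      obtain ⟨u, hu⟩ := Option.isSome_iff_exists.1 this
      exact Finset.mem_image.2 ⟨u, Finset.mem_univ u, by rw [← hia, hu]⟩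
    have h1 : (L.toFinset.biUnion S).card ≤ Fintype.card V := by
      calc (L.toFinset.biUnion S).card ≤ (Finset.univ.image (some : V → Option V)).card :=
            Finset.card_le_card hsub
        _ ≤ Finset.univ.card := Finset.card_image_le
        _ = Fintype.card V := rfl
    rw [hunion] at h1
    have h2 : ∑ v ∈ L.toFinset, (S v).card = L.toFinset.card * h := by
      rw [Finset.sum_congr rfl (fun v hv => hcard v (List.mem_toFinset.1 hv)),
        Finset.sum_const, smul_eq_mul]
    rw [h2, List.toFinset_card_of_nodup hnd] at h1
    exact h1
  rw [hlen, Nat.le_div_iff_mul_le (by omega)]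
  exact hbound
end

section
/- Every deterministic finite automaton admits at most one Wheeler order. -/
/-- `WheelerOrder E label s0 le`: `le` is a Wheeler order on the (input-consistent)
DFA with edge relation `E`, incoming-label function `label` and initial state `s0`. -/
def WheelerOrder {Q A : Type*} [LinearOrder A]
    (E : Q → Q → Prop) (label : Q → A) (s0 : Q) (le : Q → Q → Prop) : Prop :=
  IsLinearOrder Q le ∧
  (∀ u, le s0 u) ∧
  (∀ u v, le u v → ¬ le v u → label u ≤ label v) ∧
  (∀ u' u v' v, E u' u → E v' v → label u = label v → (le u v ∧ ¬ le v u) →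
    (le u' v' ∧ ¬ le v' u'))

/-- Reachability from `s0` in exactly `n` steps. -/
inductive ReachN {Q : Type*} (E : Q → Q → Prop) (s0 : Q) : ℕ → Q → Prop
  | zero : ReachN E s0 0 s0
  | succ {n p q} : ReachN E s0 n p → E p q → ReachN E s0 (n + 1) q

lemma reachN_of_reflTransGen {Q : Type*} {E : Q → Q → Prop} {s0 q : Q}
    (h : Relation.ReflTransGen (fun a b => E a b) s0 q) : ∃ n, ReachN E s0 n q := by
  induction h with
  | refl => exact ⟨0, ReachN.zero⟩
  | tail _ e ih => obtain ⟨n, hn⟩ := ih; exact ⟨n + 1, hn.succ e⟩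

lemma pred_exists {Q : Type*} {E : Q → Q → Prop} {s0 q : Q}
    (h : Relation.ReflTransGen (fun a b => E a b) s0 q) (hq : q ≠ s0) :
    ∃ p, E p q := by
  rcases h.cases_tail with h | ⟨c, _, hc⟩
  · exact absurd h hq
  · exact ⟨c, hc⟩

/-- every DFA admits at most one Wheeler order. The DFA is
input-consistent (all edges entering a state `u` carry the label `label u`),
deterministic (`hdet`), its initial state `s0` has no incoming edge, and every
state is reachable from `s0`. -/
theorem wheeler_order_unique {Q A : Type*} [Fintype Q] [LinearOrder A]
    (E : Q → Q → Prop) (label : Q → A) (s0 : Q)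
    (hdet : ∀ u v w, E u v → E u w → label v = label w → v = w)
    (hs0 : ∀ u, ¬ E u s0)
    (hreach : ∀ q, Relation.ReflTransGen (fun a b => E a b) s0 q)
    (le₁ le₂ : Q → Q → Prop)
    (h₁ : WheelerOrder E label s0 le₁) (h₂ : WheelerOrder E label s0 le₂) :
    le₁ = le₂ := by
  obtain ⟨lin₁, min₁, ax1₁, ax2₁⟩ := h₁
  obtain ⟨lin₂, min₂, ax1₂, ax2₂⟩ := h₂
  -- key lemma: no pair can be strictly ordered oppositely by the two orders
  have key : ∀ n u v, ReachN E s0 n u →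
      (le₁ u v ∧ ¬ le₁ v u) → (le₂ v u ∧ ¬ le₂ u v) → False := by
    intro n
    induction n with
    | zero =>
      intro u v hr hlt₁ hlt₂
      cases hr
      exact hlt₂.2 (min₂ v)
    | succ n ih =>
      intro u v hr hlt₁ hlt₂
      cases hr with
      | succ hp he =>
        rename_i u'
        -- v ≠ s0
        have hv : v ≠ s0 := fun h => hlt₁.2 (h ▸ min₁ u)
        obtain ⟨v', hev⟩ := pred_exists (hreach v) hv
        have hlab : label u = label v :=
          le_antisymm (ax1₁ u v hlt₁.1 hlt₁.2) (ax1₂ v u hlt₂.1 hlt₂.2)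
        have h1' := ax2₁ u' u v' v he hev hlab hlt₁
        have h2' := ax2₂ v' v u' u hev he hlab.symm hlt₂
        exact ih u' v' hp h1' h2'
  have main : ∀ u v, le₁ u v → le₂ u v := by
    intro u v h
    by_contra hn
    have h2 : le₂ v u := (lin₂.total v u).resolve_right hn
    have h1n : ¬ le₁ v u := by
      intro h'
      have : u = v := lin₁.antisymm _ _ h h'
      exact hn (this ▸ lin₂.refl u)
    obtain ⟨n, hrn⟩ := reachN_of_reflTransGen (hreach u)
    exact key n u v hrn ⟨h, h1n⟩ ⟨h2, hn⟩
  have main' : ∀ u v, le₂ u v → le₁ u v := by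
    intro u v h
    by_contra hn
    have h1 : le₁ v u := (lin₁.total v u).resolve_right hn
    have h2n : ¬ le₂ v u := by
      intro h'
      have : u = v := lin₂.antisymm _ _ h h'
      exact hn (this ▸ lin₁.refl u)
    obtain ⟨n, hrn⟩ := reachN_of_reflTransGen (hreach v)
    exact key n v u hrn ⟨h1, hn⟩ ⟨h, h2n⟩
  funext u v
  exact propext ⟨main u v, main' u v⟩
end

section
/- Let A be a Wheeler DFA with states u₁ < u₂ < ... < u_n in Wheeler order, where s₀ = u₁ has a self-loop labeled # with # strictly smaller than all alphabet characters. For each state u_i, the string λ(u_i) λ(u_{p_min(i)}) λ(u_{p_min²(i)}) ... obtained by iterating p_min is the lexicographically smallest element of I_{u_i}, the set of infinite strings readable from u_i by following edges backward. -/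
/-- Lexicographic (non-strict) order on infinite strings. -/
def seqLe {A : Type*} [LinearOrder A] (α β : ℕ → A) : Prop :=
  α = β ∨ ∃ n, (∀ m < n, α m = β m) ∧ α n < β n

/-- `Readable label E α i`: the infinite string `α` can be read starting from state
`i` and following edges of `E` in a backward fashion. -/
def Readable {n : ℕ} {A : Type*} (label : Fin n → A) (E : Fin n → Fin n → Prop)
    (α : ℕ → A) (i : Fin n) : Prop :=
  ∃ f : ℕ → Fin n, f 0 = i ∧ (∀ k, E (f (k + 1)) (f k)) ∧ ∀ k, α k = label (f k)

/-- in a Wheeler DFA (states `0 < 1 < … < n-1` in Wheeler order,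
every state having an incoming edge), the string
`λ(u_i) λ(u_{p_min(i)}) λ(u_{p_min²(i)}) …` obtained by iterating `p_min` is the
lexicographically smallest infinite string readable backward from state `i`. -/
theorem pmin_iterate_is_min {n : ℕ} {A : Type*} [LinearOrder A]
    (label : Fin n → A) (E : Fin n → Fin n → Prop)
    (hdet : ∀ u v w : Fin n, E u v → E u w → label v = label w → v = w)
    (hax1 : ∀ u v : Fin n, u < v → label u ≤ label v)
    (hax2 : ∀ u' u v' v : Fin n, E u' u → E v' v → label u = label v → u < v → u' < v')
    (hin : ∀ v : Fin n, ∃ u, E u v)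
    (pmin : Fin n → Fin n)
    (hpmin : ∀ i : Fin n, E (pmin i) i ∧ ∀ j, E j i → pmin i ≤ j)
    (i : Fin n) :
    Readable label E (fun k => label (pmin^[k] i)) i ∧
    ∀ α, Readable label E α i → seqLe (fun k => label (pmin^[k] i)) α := by
  set g : ℕ → Fin n := fun k => pmin^[k] i with hg
  have hgsucc : ∀ k, g (k + 1) = pmin (g k) := by
    intro k; simp [hg, Function.iterate_succ_apply']
  have hmono : ∀ u v : Fin n, u ≤ v → label u ≤ label v := fun u v h =>
    h.lt_or_eq.elim (fun h => hax1 _ _ h) (fun h => by rw [h])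
  constructor
  · exact ⟨g, by simp [hg], fun k => by rw [hgsucc]; exact (hpmin (g k)).1, fun k => rfl⟩
  · rintro α ⟨f, hf0, hfE, hfl⟩
    have key : ∀ k, (∀ m < k, label (g m) = label (f m)) → g k ≤ f k := by
      intro k
      induction k with
      | zero => intro _; simp [hg, hf0]
      | succ k ih =>
        intro h
        have hk : g k ≤ f k := ih (fun m hm => h m (Nat.lt_succ_of_lt hm))
        rcases lt_or_eq_of_le hk with hlt | heq
        · have := hax2 _ _ _ _ ((hpmin (g k)).1) (hfE k) (h k (Nat.lt_succ_self k)) hlt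
          rw [hgsucc]; exact le_of_lt this
        · rw [hgsucc, heq]
          exact (hpmin (f k)).2 _ (hfE k)
    by_cases hall : ∀ k, label (g k) = α k
    · left; funext k; exact hall k
    · right
      push_neg at hall
      have hN := Nat.find_spec hall
      set N := Nat.find hall with hNdef
      refine ⟨N, fun m hm => ?_, ?_⟩
      · have := Nat.find_min hall hm
        push_neg at this
        exact this
      · have hagree : ∀ m < N, label (g m) = label (f m) := by
          intro m hm
          have := Nat.find_min hall hm
          push_neg at this
          rw [this, hfl m]
        have hle : label (g N) ≤ α N := by
          rw [hfl N]; exact hmono _ _ (key N hagree)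
        exact lt_of_le_of_ne hle hN
end

section
/- Let A be a Wheeler DFA with states u₁ < ... < u_n in Wheeler order, and for each i let min_i and max_i denote respectively the lexicographically smallest and largest infinite strings readable from u_i by following edges backward. Then min₁ ⪯ max₁ ⪯ min₂ ⪯ max₂ ⪯ ... ⪯ max_{n−1} ⪯ min_n ⪯ max_n. -/
/-- with `mn i`/`mx i` the lexicographically smallest/largest infinite
strings readable backward from state `i` of a Wheeler DFA (states listed in Wheeler
order), we have `min₁ ⪯ max₁ ⪯ min₂ ⪯ max₂ ⪯ … ⪯ min_n ⪯ max_n`. -/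
theorem minmax_chain {n : ℕ} {A : Type*} [LinearOrder A]
    (label : Fin n → A) (E : Fin n → Fin n → Prop)
    (hdet : ∀ u v w : Fin n, E u v → E u w → label v = label w → v = w)
    (hax1 : ∀ u v : Fin n, u < v → label u ≤ label v)
    (hax2 : ∀ u' u v' v : Fin n, E u' u → E v' v → label u = label v → u < v → u' < v')
    (hin : ∀ v : Fin n, ∃ u, E u v)
    (mn mx : Fin n → ℕ → A)
    (hmn : ∀ i, Readable label E (mn i) i ∧ ∀ α, Readable label E α i → seqLe (mn i) α)
    (hmx : ∀ i, Readable label E (mx i) i ∧ ∀ α, Readable label E α i → seqLe α (mx i)) :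
    (∀ i : Fin n, seqLe (mn i) (mx i)) ∧
    (∀ i j : Fin n, i < j → seqLe (mx i) (mn j)) := by
  classical
  have key : ∀ (α β : ℕ → A) (i j : Fin n), i < j →
      Readable label E α i → Readable label E β j → seqLe α β := by
    intro α β i j hij hα hβ
    obtain ⟨f, hf0, hfE, hfl⟩ := hα
    obtain ⟨g, hg0, hgE, hgl⟩ := hβ
    by_cases heq : α = β
    · exact Or.inl heq
    · have hex : ∃ k, α k ≠ β k := by
        by_contra h; push_neg at h; exact heq (funext h)
      set N := Nat.find hex with hNdef
      have hN : α N ≠ β N := Nat.find_spec hex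
      have hlt : ∀ m < N, α m = β m := by
        intro m hm
        by_contra h
        exact (Nat.find_min hex hm) h
      have keyk : ∀ k, k ≤ N → f k < g k := by
        intro k hk
        induction k with
        | zero => rw [hf0, hg0]; exact hij
        | succ k ih =>
          have hkN : k < N := hk
          have hl : label (f k) = label (g k) := by
            rw [← hfl, ← hgl]; exact hlt k hkN
          exact hax2 _ _ _ _ (hfE k) (hgE k) hl (ih (Nat.le_of_succ_le hk))
      have hle : α N ≤ β N := by
        rw [hfl, hgl]; exact hax1 _ _ (keyk N le_rfl)
      exact Or.inr ⟨N, hlt, lt_of_le_of_ne hle hN⟩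
  constructor
  · intro i
    exact (hmx i).2 (mn i) (hmn i).1
  · intro i j hij
    exact key (mx i) (mn j) i j hij (hmx i).1 (hmn j).1
end

section
/- Let A be a Wheeler DFA with states u₁ < ... < u_n in Wheeler order. For any 1 ≤ r ≤ s ≤ n and character c ∈ Σ, the set E_{r,s,c} = { j : λ(u_j) = c and (u_i, u_j) ∈ E for some i ∈ [r, s] } is an interval of integers, i.e., there exist r' ≤ s' with E_{r,s,c} = [r', s'] (or E_{r,s,c} is empty). -/
/-- in a Wheeler DFA with states `0 < 1 < … < n-1` in Wheeler order,
for any `r ≤ s` and any character `c`, the set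
`E_{r,s,c} = { j : label j = c ∧ ∃ i ∈ [r,s], E i j }` is an interval (order-convex). -/
theorem forward_search_interval {n : ℕ} {A : Type*} [LinearOrder A]
    (label : Fin n → A) (E : Fin n → Fin n → Prop)
    (hdet : ∀ u v w : Fin n, E u v → E u w → label v = label w → v = w)
    (hax1 : ∀ u v : Fin n, u < v → label u ≤ label v)
    (hax2 : ∀ u' u v' v : Fin n, E u' u → E v' v → label u = label v → u < v → u' < v')
    (hin : ∀ v : Fin n, ∃ u, E u v)
    (r s : Fin n) (hrs : r ≤ s) (c : A) :
    ∀ j₁ j₂ j₃ : Fin n,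
      (label j₁ = c ∧ ∃ i, r ≤ i ∧ i ≤ s ∧ E i j₁) →
      (label j₃ = c ∧ ∃ i, r ≤ i ∧ i ≤ s ∧ E i j₃) →
      j₁ ≤ j₂ → j₂ ≤ j₃ →
      (label j₂ = c ∧ ∃ i, r ≤ i ∧ i ≤ s ∧ E i j₂) := by
  intro j₁ j₂ j₃ h1 h3 h12 h23
  obtain ⟨hl1, i₁, hri1, hi1s, hE1⟩ := h1
  obtain ⟨hl3, i₃, hri3, hi3s, hE3⟩ := h3
  rcases eq_or_lt_of_le h12 with h | h12
  · exact ⟨h ▸ hl1, i₁, hri1, hi1s, h ▸ hE1⟩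
  rcases eq_or_lt_of_le h23 with h | h23
  · exact ⟨h ▸ hl3, i₃, hri3, hi3s, h.symm ▸ hE3⟩
  have hl2 : label j₂ = c :=
    le_antisymm (hl3 ▸ hax1 _ _ h23) (hl1 ▸ hax1 _ _ h12)
  obtain ⟨i₂, hE2⟩ := hin j₂
  have h1' : i₁ < i₂ := hax2 _ _ _ _ hE1 hE2 (hl1.trans hl2.symm) h12
  have h2' : i₂ < i₃ := hax2 _ _ _ _ hE2 hE3 (hl2.trans hl3.symm) h23
  exact ⟨hl2, i₂, hri1.trans h1'.le, h2'.le.trans hi3s, hE2⟩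
end

section
/- Let A be a Wheeler DFA with states u₁ < ... < u_n in Wheeler order. For 2 ≤ i ≤ n, if lcp(max_{i−1}, min_i) ≥ 1 then p_max(i−1) < p_min(i), where p_max(i−1) is the largest index k with (u_k, u_{i−1}) ∈ E and p_min(i) is the smallest index k' with (u_{k'}, u_i) ∈ E. -/
open Classical in
/-- Length (possibly `∞`) of the longest common prefix of two infinite strings. -/
noncomputable def seqLcp {A : Type*} (α β : ℕ → A) : ℕ∞ :=
  if h : α = β then ⊤ else ((Nat.find (Function.ne_iff.mp h) : ℕ) : ℕ∞)

/-- in a Wheeler DFA with states in Wheeler order, for consecutive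
states `j, i` (i.e. `j + 1 = i`), if `lcp(max_j, min_i) ≥ 1` then
`p_max(j) < p_min(i)`. -/
theorem pmax_lt_pmin_of_lcp_pos {n : ℕ} {A : Type*} [LinearOrder A]
    (label : Fin n → A) (E : Fin n → Fin n → Prop)
    (hdet : ∀ u v w : Fin n, E u v → E u w → label v = label w → v = w)
    (hax1 : ∀ u v : Fin n, u < v → label u ≤ label v)
    (hax2 : ∀ u' u v' v : Fin n, E u' u → E v' v → label u = label v → u < v → u' < v')
    (hin : ∀ v : Fin n, ∃ u, E u v)
    (mn mx : Fin n → ℕ → A)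
    (hmn : ∀ i, Readable label E (mn i) i ∧ ∀ α, Readable label E α i → seqLe (mn i) α)
    (hmx : ∀ i, Readable label E (mx i) i ∧ ∀ α, Readable label E α i → seqLe α (mx i))
    (pmin pmax : Fin n → Fin n)
    (hpmin : ∀ i : Fin n, E (pmin i) i ∧ ∀ j, E j i → pmin i ≤ j)
    (hpmax : ∀ i : Fin n, E (pmax i) i ∧ ∀ j, E j i → j ≤ pmax i)
    (j i : Fin n) (hji : (j : ℕ) + 1 = (i : ℕ))
    (hlcp : 1 ≤ seqLcp (mx j) (mn i)) :
    pmax j < pmin i := by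
  have h0 : mx j 0 = mn i 0 := by
    classical
    unfold seqLcp at hlcp
    split_ifs at hlcp with h
    · exact congrFun h 0
    · by_contra hne
      have h0 : @Nat.find _
          (fun a => @instDecidableNot _ (Classical.propDecidable (mx j a = mn i a)))
          (Function.ne_iff.mp h) = 0 := (@Nat.find_eq_zero _ (fun a => @instDecidableNot _ (Classical.propDecidable (mx j a = mn i a))) _).mpr hne
      rw [h0] at hlcp
      simp at hlcp
  have hmxj : mx j 0 = label j := by
    obtain ⟨f, hf0, _, hfl⟩ := (hmx j).1
    rw [hfl 0, hf0]
  have hmni : mn i 0 = label i := by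
    obtain ⟨f, hf0, _, hfl⟩ := (hmn i).1
    rw [hfl 0, hf0]
  have hlab : label j = label i := by rw [← hmxj, ← hmni, h0]
  have hji' : j < i := by
    rw [Fin.lt_def]; omega
  exact hax2 (pmax j) j (pmin i) i (hpmax j).1 (hpmin i).1 hlab hji'
end

section
/- Let A be a Wheeler DFA with states u₁ < ... < u_n. For 2 ≤ i ≤ n with λ(u_{i−1}) = λ(u_i), letting k = p_max(i−1) and k' = p_min(i), it holds that lcp(max_{i−1}, min_i) = 1 + min{ LCP_A[2k+1], LCP_A[2k+2], ..., LCP_A[2k'−1] }, where LCP_A[2j] = lcp(min_j, max_j) and LCP_A[2j−1] = lcp(max_{j−1}, min_j), with the convention 1 + ∞ = ∞. -/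
namespace W9
open Classical
variable {A : Type*} [LinearOrder A]
set_option linter.unusedSectionVars false

lemma find_unique {p : ℕ → Prop} {inst : DecidablePred p} (h : ∃ n, p n) {m : ℕ}
    (hm : p m) (hmin : ∀ k < m, ¬ p k) : @Nat.find p inst h = m :=
  le_antisymm (Nat.find_le hm)
    (le_of_not_gt fun hc => hmin _ hc (Nat.find_spec h))

lemma seqLcp_eq {α β : ℕ → A} {m : ℕ} (h : ∀ t < m, α t = β t) (hm : α m ≠ β m) :
    seqLcp α β = (m : ℕ∞) := by
  have hne : α ≠ β := fun he => hm (congrFun he m)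
  rw [seqLcp, dif_neg hne]
  norm_cast
  exact find_unique _ hm (fun k hk hc => hc (h k hk))

lemma seqLcp_self (α : ℕ → A) : seqLcp α α = ⊤ := by rw [seqLcp, dif_pos rfl]

lemma seqLe_lcp {α β : ℕ → A} (h : seqLe α β) (hne : α ≠ β) :
    ∃ d : ℕ, seqLcp α β = (d : ℕ∞) ∧ (∀ t < d, α t = β t) ∧ α d < β d := by
  obtain ⟨m, hag, hlt⟩ := h.resolve_left hne
  exact ⟨m, seqLcp_eq hag (ne_of_lt hlt), hag, hlt⟩

lemma seqLe_trans {α β γ : ℕ → A} (h1 : seqLe α β) (h2 : seqLe β γ) : seqLe α γ := by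
  rcases h1 with he | ⟨m, hag1, hlt1⟩
  · rwa [he]
  rcases h2 with he | ⟨m', hag2, hlt2⟩
  · rw [← he]; exact Or.inr ⟨m, hag1, hlt1⟩
  refine Or.inr ⟨min m m', fun t ht => ?_, ?_⟩
  · exact (hag1 t (lt_of_lt_of_le ht (min_le_left _ _))).trans
      (hag2 t (lt_of_lt_of_le ht (min_le_right _ _)))
  · rcases lt_trichotomy m m' with h | h | h
    · rw [min_eq_left h.le]; exact lt_of_lt_of_eq hlt1 (hag2 m h)
    · subst h; rw [min_self]; exact hlt1.trans hlt2
    · rw [min_eq_right h.le]; exact lt_of_eq_of_lt (hag1 m' h) hlt2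

lemma seqLe_antisymm {α β : ℕ → A} (h1 : seqLe α β) (h2 : seqLe β α) : α = β := by
  by_contra hne
  obtain ⟨m, hag1, hlt1⟩ := h1.resolve_left hne
  obtain ⟨m', hag2, hlt2⟩ := h2.resolve_left (Ne.symm hne)
  rcases lt_trichotomy m m' with h | h | h
  · exact ne_of_lt hlt1 (hag2 m h).symm
  · subst h; exact absurd (hlt1.trans hlt2) (lt_irrefl _)
  · exact ne_of_lt hlt2 (hag1 m' h).symm

lemma seqLcp_min {α β γ : ℕ → A} (h1 : seqLe α β) (h2 : seqLe β γ) :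
    seqLcp α γ = min (seqLcp α β) (seqLcp β γ) := by
  by_cases e1 : α = β
  · subst e1; rw [seqLcp_self]; simp
  by_cases e2 : β = γ
  · subst e2; rw [seqLcp_self]; simp
  obtain ⟨d1, hc1, hag1, hlt1⟩ := seqLe_lcp h1 e1
  obtain ⟨d2, hc2, hag2, hlt2⟩ := seqLe_lcp h2 e2
  have key : seqLcp α γ = ((min d1 d2 : ℕ) : ℕ∞) := by
    apply seqLcp_eq
    · intro t ht
      exact (hag1 t (lt_of_lt_of_le ht (min_le_left _ _))).trans
        (hag2 t (lt_of_lt_of_le ht (min_le_right _ _)))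
    · rcases lt_trichotomy d1 d2 with h | h | h
      · rw [min_eq_left h.le]; exact ne_of_lt (lt_of_lt_of_eq hlt1 (hag2 d1 h))
      · subst h; rw [min_self]; exact ne_of_lt (hlt1.trans hlt2)
      · rw [min_eq_right h.le]; exact ne_of_lt (lt_of_eq_of_lt (hag1 d2 h) hlt2)
  rw [key, hc1, hc2]
  rcases le_total d1 d2 with h | h
  · rw [min_eq_left h, min_eq_left (by exact_mod_cast h)]
  · rw [min_eq_right h, min_eq_right (by exact_mod_cast h)]

lemma seqLcp_shift {α β : ℕ → A} (h0 : α 0 = β 0) :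
    seqLcp α β = 1 + seqLcp (fun t => α (t + 1)) (fun t => β (t + 1)) := by
  by_cases ht : (fun t => α (t + 1)) = (fun t => β (t + 1))
  · have he : α = β := by
      funext t
      cases t with
      | zero => exact h0
      | succ t => exact congrFun ht t
    rw [seqLcp, dif_pos he, seqLcp, dif_pos ht]; simp
  · have hne := Function.ne_iff.mp ht
    have hd1 : seqLcp (fun t => α (t + 1)) (fun t => β (t + 1)) = ((Nat.find hne : ℕ) : ℕ∞) :=
      seqLcp_eq (fun t htd => not_not.mp (Nat.find_min hne htd)) (Nat.find_spec hne)
    have hd2 : seqLcp α β = ((Nat.find hne + 1 : ℕ) : ℕ∞) := by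
      apply seqLcp_eq
      · intro t htd
        cases t with
        | zero => exact h0
        | succ t =>
          have htd' : t < Nat.find hne := by omega
          exact not_not.mp (Nat.find_min hne htd')
      · exact Nat.find_spec hne
    rw [hd1, hd2]
    push_cast
    rw [add_comm]

lemma seqLe_tail {α β : ℕ → A} (h : seqLe α β) (h0 : α 0 = β 0) :
    seqLe (fun t => α (t + 1)) (fun t => β (t + 1)) := by
  rcases h with he | ⟨m, hag, hlt⟩
  · exact Or.inl (by rw [he])
  · cases m with
    | zero => exact absurd h0 (ne_of_lt hlt)
    | succ m => exact Or.inr ⟨m, fun t htm => hag (t + 1) (by omega), hlt⟩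

lemma readable_le {n : ℕ} (label : Fin n → A) (E : Fin n → Fin n → Prop)
    (hax1 : ∀ u v : Fin n, u < v → label u ≤ label v)
    (hax2 : ∀ u' u v' v : Fin n, E u' u → E v' v → label u = label v → u < v → u' < v')
    {u v : Fin n} {α β : ℕ → A}
    (huv : u < v) (hα : Readable label E α u) (hβ : Readable label E β v) :
    seqLe α β := by
  obtain ⟨fa, ha0, haE, haL⟩ := hα
  obtain ⟨fb, hb0, hbE, hbL⟩ := hβ
  have key : ∀ m, (∀ t < m, α t = β t) → fa m < fb m := by
    intro m
    induction m with
    | zero => intro _; rw [ha0, hb0]; exact huv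
    | succ m ih =>
      intro hag
      have hm := ih (fun t ht => hag t (ht.trans (Nat.lt_succ_self m)))
      have hlab : label (fa m) = label (fb m) := by
        rw [← haL, ← hbL]; exact hag m (Nat.lt_succ_self m)
      exact hax2 _ _ _ _ (haE m) (hbE m) hlab hm
  by_cases he : α = β
  · exact Or.inl he
  · have hne := Function.ne_iff.mp he
    refine Or.inr ⟨Nat.find hne, fun t ht => not_not.mp (Nat.find_min hne ht), ?_⟩
    have hfab := key (Nat.find hne) (fun t ht => not_not.mp (Nat.find_min hne ht))
    have hle := hax1 _ _ hfab
    exact lt_of_le_of_ne (by rw [haL, hbL]; exact hle) (Nat.find_spec hne)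

def cons (a : A) (g : ℕ → A) : ℕ → A := fun t => match t with
  | 0 => a
  | (t + 1) => g t

lemma readable_tail {n : ℕ} {label : Fin n → A} {E : Fin n → Fin n → Prop}
    {α : ℕ → A} {u : Fin n} (h : Readable label E α u) :
    ∃ w, E w u ∧ Readable label E (fun t => α (t + 1)) w := by
  obtain ⟨g, h0, hE, hL⟩ := h
  exact ⟨g 1, h0 ▸ hE 0, fun k => g (k + 1), rfl, fun k => hE (k + 1), fun k => hL (k + 1)⟩

lemma readable_cons {n : ℕ} {label : Fin n → A} {E : Fin n → Fin n → Prop}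
    {α : ℕ → A} {u v : Fin n} (huv : E u v) (h : Readable label E α u) :
    Readable label E (cons (label v) α) v := by
  obtain ⟨g, h0, hE, hL⟩ := h
  refine ⟨fun t => match t with | 0 => v | (t + 1) => g t, rfl, ?_, ?_⟩
  · intro k
    cases k with
    | zero => show E (g 0) v; rw [h0]; exact huv
    | succ k => exact hE k
  · intro k
    cases k with
    | zero => rfl
    | succ k => exact hL k

end W9

/-- in a Wheeler DFA (states `u_1 < … < u_n` listed here 0-based as
`Fin n`, so the LCP array entry `LCP_A[2p]` of the paper is `f (2*i+2)` for the
0-based state `i = p-1`, and `LCP_A[2p-1]` is `f (2*i+1)`), for consecutive states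
`j, i` with equal incoming labels, letting `k = p_max(j)` and `k' = p_min(i)`:
`lcp(max_j, min_i) = 1 + min{ LCP_A[2k+1], …, LCP_A[2k'-1] }` (1-based indices),
i.e. `1 +` the infimum of `f` over `[2k+3, 2k'+1]` in 0-based indexing. -/
theorem lcp_odd_recursion {n : ℕ} {A : Type*} [LinearOrder A]
    (label : Fin n → A) (E : Fin n → Fin n → Prop)
    (hdet : ∀ u v w : Fin n, E u v → E u w → label v = label w → v = w)
    (hax1 : ∀ u v : Fin n, u < v → label u ≤ label v)
    (hax2 : ∀ u' u v' v : Fin n, E u' u → E v' v → label u = label v → u < v → u' < v')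
    (hin : ∀ v : Fin n, ∃ u, E u v)
    (mn mx : Fin n → ℕ → A)
    (hmn : ∀ i, Readable label E (mn i) i ∧ ∀ α, Readable label E α i → seqLe (mn i) α)
    (hmx : ∀ i, Readable label E (mx i) i ∧ ∀ α, Readable label E α i → seqLe α (mx i))
    (pmin pmax : Fin n → Fin n)
    (hpmin : ∀ i : Fin n, E (pmin i) i ∧ ∀ j, E j i → pmin i ≤ j)
    (hpmax : ∀ i : Fin n, E (pmax i) i ∧ ∀ j, E j i → j ≤ pmax i)
    (f : ℕ → ℕ∞)
    (hfe : ∀ i : Fin n, f (2 * (i : ℕ) + 2) = seqLcp (mn i) (mx i))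
    (hfo : ∀ i j : Fin n, (j : ℕ) + 1 = (i : ℕ) → f (2 * (i : ℕ) + 1) = seqLcp (mx j) (mn i))
    (j i : Fin n) (hji : (j : ℕ) + 1 = (i : ℕ)) (hlab : label j = label i) :
    seqLcp (mx j) (mn i) =
      1 + (Finset.Icc (2 * (pmax j : ℕ) + 3) (2 * (pmin i : ℕ) + 1)).inf f := by
  -- convenient monotonicity helpers
  have hmono_mx : ∀ (w v : Fin n) (α : ℕ → A), w ≤ v → Readable label E α w →
      seqLe α (mx v) := by
    intro w v α hwv hα
    rcases eq_or_lt_of_le hwv with he | hlt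
    · exact (hmx v).2 α (he ▸ hα)
    · exact W9.readable_le label E hax1 hax2 hlt hα (hmx v).1
  have hmono_mn : ∀ (v w : Fin n) (α : ℕ → A), v ≤ w → Readable label E α w →
      seqLe (mn v) α := by
    intro v w α hvw hα
    rcases eq_or_lt_of_le hvw with he | hlt
    · exact (hmn v).2 α (he ▸ hα)
    · exact W9.readable_le label E hax1 hax2 hlt (hmn v).1 hα
  -- heads
  have head_mx : ∀ v : Fin n, mx v 0 = label v := by
    intro v; obtain ⟨g, g0, _, gL⟩ := (hmx v).1; rw [gL 0, g0]
  have head_mn : ∀ v : Fin n, mn v 0 = label v := by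
    intro v; obtain ⟨g, g0, _, gL⟩ := (hmn v).1; rw [gL 0, g0]
  -- tails
  have tail_mx : ∀ v : Fin n, (fun t => mx v (t + 1)) = mx (pmax v) := by
    intro v
    obtain ⟨w, hwE, hwR⟩ := W9.readable_tail (hmx v).1
    have h1 : seqLe (fun t => mx v (t + 1)) (mx (pmax v)) :=
      hmono_mx w (pmax v) _ ((hpmax v).2 w hwE) hwR
    have hcons : Readable label E (W9.cons (label v) (mx (pmax v))) v :=
      W9.readable_cons (hpmax v).1 (hmx (pmax v)).1
    have h2 : seqLe (W9.cons (label v) (mx (pmax v))) (mx v) := (hmx v).2 _ hcons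
    have h0 : W9.cons (label v) (mx (pmax v)) 0 = mx v 0 := by rw [head_mx v]; rfl
    have h3 := W9.seqLe_tail h2 h0
    exact W9.seqLe_antisymm h1 h3
  have tail_mn : ∀ v : Fin n, (fun t => mn v (t + 1)) = mn (pmin v) := by
    intro v
    obtain ⟨w, hwE, hwR⟩ := W9.readable_tail (hmn v).1
    have h1 : seqLe (mn (pmin v)) (fun t => mn v (t + 1)) :=
      hmono_mn (pmin v) w _ ((hpmin v).2 w hwE) hwR
    have hcons : Readable label E (W9.cons (label v) (mn (pmin v))) v :=
      W9.readable_cons (hpmin v).1 (hmn (pmin v)).1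
    have h2 : seqLe (mn v) (W9.cons (label v) (mn (pmin v))) := (hmn v).2 _ hcons
    have h0 : mn v 0 = W9.cons (label v) (mn (pmin v)) 0 := by rw [head_mn v]; rfl
    have h3 := W9.seqLe_tail h2 h0
    exact W9.seqLe_antisymm h3 h1
  -- k < k'
  have hji' : j < i := Fin.lt_def.mpr (by omega)
  have hki : (pmax j : ℕ) < (pmin i : ℕ) :=
    Fin.lt_def.mp (hax2 _ _ _ _ (hpmax j).1 (hpmin i).1 hlab hji')
  -- chain lemma by induction on the gap
  have chain : ∀ (d : ℕ) (a b : Fin n), (b : ℕ) = (a : ℕ) + d + 1 →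
      seqLcp (mx a) (mn b) = (Finset.Icc (2 * (a : ℕ) + 3) (2 * (b : ℕ) + 1)).inf f := by
    intro d
    induction d with
    | zero =>
      intro a b hab
      have hb : 2 * (b : ℕ) + 1 = 2 * (a : ℕ) + 3 := by omega
      have h1 := hfo b a (by omega)
      rw [hb] at h1
      rw [show Finset.Icc (2 * (a : ℕ) + 3) (2 * (b : ℕ) + 1) = {2 * (a : ℕ) + 3} from by
        rw [hb]; exact Finset.Icc_self _]
      rw [Finset.inf_singleton]
      exact h1.symm
    | succ d ih =>
      intro a b hab
      have hbn : (b : ℕ) < n := b.isLt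
      set c : Fin n := ⟨(b : ℕ) - 1, by omega⟩ with hc
      have hcval : (c : ℕ) = (b : ℕ) - 1 := rfl
      have hac : (c : ℕ) = (a : ℕ) + d + 1 := by omega
      have hlt_ac : a < c := Fin.lt_def.mpr (by omega)
      have hlt_cb : c < b := Fin.lt_def.mpr (by omega)
      have le1 : seqLe (mx a) (mn c) :=
        W9.readable_le label E hax1 hax2 hlt_ac (hmx a).1 (hmn c).1
      have le2 : seqLe (mn c) (mx c) := (hmn c).2 _ (hmx c).1
      have le3 : seqLe (mx c) (mn b) :=
        W9.readable_le label E hax1 hax2 hlt_cb (hmx c).1 (hmn b).1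
      have le12 : seqLe (mx a) (mx c) := W9.seqLe_trans le1 le2
      have e1 := W9.seqLcp_min le12 le3
      have e2 := W9.seqLcp_min le1 le2
      have e3 := ih a c hac
      have e4 := hfe c
      have e5 := hfo b c (by omega)
      have hsplit : Finset.Icc (2 * (a : ℕ) + 3) (2 * (b : ℕ) + 1)
          = insert (2 * (c : ℕ) + 2) (insert (2 * (c : ℕ) + 3)
              (Finset.Icc (2 * (a : ℕ) + 3) (2 * (c : ℕ) + 1))) := by
        ext t
        simp only [Finset.mem_Icc, Finset.mem_insert]
        omega
      have hb1 : 2 * (b : ℕ) + 1 = 2 * (c : ℕ) + 3 := by omega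
      have e5' : f (2 * (c : ℕ) + 3) = seqLcp (mx c) (mn b) := by rw [← hb1]; exact e5
      have hmin : ∀ X Y Z : ℕ∞, min (min X Y) Z = Y ⊓ (Z ⊓ X) := by
        intro X Y Z
        rw [min_comm X Y, min_assoc, min_comm X Z]
      rw [hsplit, Finset.inf_insert, Finset.inf_insert, e1, e2, e3, ← e4, ← e5']
      exact hmin _ _ _
  have hd : (pmin i : ℕ) = (pmax j : ℕ) + ((pmin i : ℕ) - (pmax j : ℕ) - 1) + 1 := by omega
  have hmain := chain _ (pmax j) (pmin i) hd
  have hheads : mx j 0 = mn i 0 := by rw [head_mx j, head_mn i]; exact hlab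
  rw [W9.seqLcp_shift hheads, tail_mx j, tail_mn i, hmain]
end

section
/- Let A be a Wheeler DFA with states u₁ < ... < u_n. For every 1 ≤ i ≤ n, letting k = p_min(i) and k' = p_max(i), it holds that k ≤ k' and lcp(min_i, max_i) = 1 + min{ LCP_A[2k], LCP_A[2k+1], ..., LCP_A[2k'] }, with the convention 1 + ∞ = ∞. -/
set_option linter.unusedSectionVars false

section Aux
variable {A : Type*} [LinearOrder A]

lemma seqLe_refl (α : ℕ → A) : seqLe α α := Or.inl rfl

lemma seqLe_leAt {α β : ℕ → A} (h : seqLe α β) (n : ℕ) (hp : ∀ m < n, α m = β m) :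
    α n ≤ β n := by
  rcases h with rfl | ⟨p, hpre, hlt⟩
  · exact le_rfl
  rcases lt_trichotomy p n with h1 | rfl | h1
  · exact absurd (hp p h1) (ne_of_lt hlt)
  · exact hlt.le
  · exact (hpre n h1).le

lemma seqLe_trans {α β γ : ℕ → A} (h1 : seqLe α β) (h2 : seqLe β γ) : seqLe α γ := by
  rcases h1 with rfl | ⟨p, hp, hp'⟩
  · exact h2
  rcases h2 with rfl | ⟨q, hq, hq'⟩
  · exact Or.inr ⟨p, hp, hp'⟩
  rcases lt_trichotomy p q with h | rfl | h
  · exact Or.inr ⟨p, fun m hm => (hp m hm).trans (hq m (hm.trans h)), hp'.trans_eq (hq p h)⟩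
  · exact Or.inr ⟨p, fun m hm => (hp m hm).trans (hq m hm), hp'.trans hq'⟩
  · exact Or.inr ⟨q, fun m hm => (hp m (hm.trans h)).trans (hq m hm), (hp q h).trans_lt hq'⟩

lemma seqLe_antisymm {α β : ℕ → A} (h1 : seqLe α β) (h2 : seqLe β α) : α = β := by
  rcases h1 with rfl | ⟨p, hp, hp'⟩
  · rfl
  rcases h2 with rfl | ⟨q, hq, hq'⟩
  · rfl
  exfalso
  rcases lt_trichotomy p q with h | rfl | h
  · exact absurd (hq p h).symm (ne_of_lt hp')
  · exact absurd hq' (not_lt.mpr hp'.le)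
  · exact absurd (hp q h) (ne_of_gt hq')

lemma seqLe_tail {α β : ℕ → A} (h : seqLe α β) (h0 : α 0 = β 0) :
    seqLe (fun m => α (m + 1)) (fun m => β (m + 1)) := by
  rcases h with rfl | ⟨p, hp, hp'⟩
  · exact Or.inl rfl
  cases p with
  | zero => exact absurd h0 (ne_of_lt hp')
  | succ q => exact Or.inr ⟨q, fun m hm => hp (m + 1) (by omega), hp'⟩

lemma le_seqLcp_iff (α β : ℕ → A) (N : ℕ) :
    (N : ℕ∞) ≤ seqLcp α β ↔ ∀ m < N, α m = β m := by
  unfold seqLcp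
  split_ifs with h
  · simp [h]
  · rw [Nat.cast_le]
    have key : ∀ (inst : DecidablePred fun n => α n ≠ β n) (H : ∃ n, α n ≠ β n),
        (N ≤ @Nat.find _ inst H ↔ ∀ m < N, α m = β m) := by
      intro inst H
      rw [Nat.le_find_iff]
      simp
    exact key _ _

lemma enat_eq_of_nat_le_iff {x y : ℕ∞} (h : ∀ N : ℕ, (N : ℕ∞) ≤ x ↔ (N : ℕ∞) ≤ y) :
    x = y := by
  induction x using ENat.recTopCoe with
  | top =>
    induction y using ENat.recTopCoe with
    | top => rfl
    | coe m =>
      have := (h (m + 1)).1 le_top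
      rw [Nat.cast_le] at this
      omega
  | coe m =>
    induction y using ENat.recTopCoe with
    | top =>
      have := (h (m + 1)).2 le_top
      rw [Nat.cast_le] at this
      omega
    | coe l =>
      have h1 := (h m).1 le_rfl
      have h2 := (h l).2 le_rfl
      rw [Nat.cast_le] at h1 h2
      congr 1
      omega

lemma seqLcp_min {α β γ : ℕ → A} (h1 : seqLe α β) (h2 : seqLe β γ) :
    seqLcp α γ = min (seqLcp α β) (seqLcp β γ) := by
  apply enat_eq_of_nat_le_iff
  intro N
  rw [le_min_iff, le_seqLcp_iff, le_seqLcp_iff, le_seqLcp_iff]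
  constructor
  · intro h
    have key : ∀ m, m < N → α m = β m ∧ β m = γ m := by
      intro m
      induction m using Nat.strong_induction_on with
      | _ m ih =>
        intro hm
        have p1 : ∀ m' < m, α m' = β m' := fun m' hm' => (ih m' hm' (hm'.trans hm)).1
        have p2 : ∀ m' < m, β m' = γ m' := fun m' hm' => (ih m' hm' (hm'.trans hm)).2
        have a1 := seqLe_leAt h1 m p1
        have a2 := seqLe_leAt h2 m p2
        have hac := h m hm
        exact ⟨le_antisymm a1 (a2.trans_eq hac.symm),
               le_antisymm a2 (hac.symm.le.trans a1)⟩
    exact ⟨fun m hm => (key m hm).1, fun m hm => (key m hm).2⟩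
  · rintro ⟨ha, hb⟩ m hm
    exact (ha m hm).trans (hb m hm)

lemma seqLcp_succ {α β : ℕ → A} (h0 : α 0 = β 0) :
    seqLcp α β = 1 + seqLcp (fun m => α (m + 1)) (fun m => β (m + 1)) := by
  apply enat_eq_of_nat_le_iff
  intro N
  cases N with
  | zero => simp
  | succ N =>
    rw [le_seqLcp_iff]
    have hcast : ((N + 1 : ℕ) : ℕ∞) = 1 + (N : ℕ∞) := by push_cast; rw [add_comm]
    rw [hcast, ENat.add_le_add_iff_left (by simp : (1 : ℕ∞) ≠ ⊤), le_seqLcp_iff]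
    constructor
    · intro h m hm
      exact h (m + 1) (by omega)
    · intro h m hm
      cases m with
      | zero => exact h0
      | succ q => exact h q (by omega)

lemma seqLcp_chain (c : ℕ → ℕ → A) :
    ∀ M, 1 ≤ M → (∀ t < M, seqLe (c t) (c (t + 1))) →
      seqLcp (c 0) (c M) = (Finset.range M).inf (fun t => seqLcp (c t) (c (t + 1))) := by
  have chain_le : ∀ M, (∀ t < M, seqLe (c t) (c (t + 1))) → seqLe (c 0) (c M) := by
    intro M
    induction M with
    | zero => exact fun _ => seqLe_refl _
    | succ M ih =>
      intro hc
      exact seqLe_trans (ih fun t ht => hc t (ht.trans (Nat.lt_succ_self M)))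
        (hc M (Nat.lt_succ_self M))
  intro M
  induction M with
  | zero => omega
  | succ M ih =>
    intro _ hc
    rcases Nat.eq_zero_or_pos M with rfl | hM
    · simp [Finset.range_one]
    · have hc' : ∀ t < M, seqLe (c t) (c (t + 1)) :=
        fun t ht => hc t (ht.trans (Nat.lt_succ_self M))
      rw [seqLcp_min (chain_le M hc') (hc M (Nat.lt_succ_self M)), ih hM hc',
        Finset.range_add_one, Finset.inf_insert]
      rw [min_comm]

end Aux

section Read
variable {n : ℕ} {A : Type*} [LinearOrder A] (label : Fin n → A) (E : Fin n → Fin n → Prop)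

lemma readable_head {α : ℕ → A} {i : Fin n} (h : Readable label E α i) : α 0 = label i := by
  obtain ⟨f, h0, _, h2⟩ := h
  rw [h2 0, h0]

lemma readable_tail {α : ℕ → A} {i : Fin n} (h : Readable label E α i) :
    ∃ j, E j i ∧ Readable label E (fun m => α (m + 1)) j := by
  obtain ⟨f, h0, h1, h2⟩ := h
  exact ⟨f 1, h0 ▸ h1 0, fun m => f (m + 1), rfl, fun k => h1 (k + 1), fun k => h2 (k + 1)⟩

lemma readable_cons {β : ℕ → A} {j i : Fin n} (hE : E j i) (h : Readable label E β j) :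
    Readable label E (fun m => Nat.casesOn m (label i) β) i := by
  obtain ⟨g, h0, h1, h2⟩ := h
  refine ⟨fun m => Nat.casesOn m i g, rfl, ?_, ?_⟩
  · intro k
    cases k with
    | zero => show E (g 0) i; rw [h0]; exact hE
    | succ q => exact h1 q
  · intro k
    cases k with
    | zero => rfl
    | succ q => exact h2 q

lemma readable_keyA
    (hax1 : ∀ u v : Fin n, u < v → label u ≤ label v)
    (hax2 : ∀ u' u v' v : Fin n, E u' u → E v' v → label u = label v → u < v → u' < v') :
    ∀ N (α β : ℕ → A) (u v : Fin n), u < v → Readable label E α u → Readable label E β v →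
      (∀ m < N, α m = β m) → α N ≤ β N := by
  intro N
  induction N with
  | zero =>
    rintro α β u v huv ⟨f, hf0, hf1, hf2⟩ ⟨g, hg0, hg1, hg2⟩ _
    rw [hf2 0, hg2 0, hf0, hg0]
    exact hax1 _ _ huv
  | succ N ih =>
    rintro α β u v huv ⟨f, hf0, hf1, hf2⟩ ⟨g, hg0, hg1, hg2⟩ hpre
    have hlab : label u = label v := by
      have := hpre 0 (Nat.succ_pos N)
      rwa [hf2 0, hg2 0, hf0, hg0] at this
    have hfg : f 1 < g 1 := hax2 (f 1) u (g 1) v (hf0 ▸ hf1 0) (hg0 ▸ hg1 0) hlab huv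
    exact ih (fun m => α (m + 1)) (fun m => β (m + 1)) (f 1) (g 1) hfg
      ⟨fun m => f (m + 1), rfl, fun k => hf1 (k + 1), fun k => hf2 (k + 1)⟩
      ⟨fun m => g (m + 1), rfl, fun k => hg1 (k + 1), fun k => hg2 (k + 1)⟩
      (fun m hm => hpre (m + 1) (by omega))

lemma readable_lt_seqLe
    (hax1 : ∀ u v : Fin n, u < v → label u ≤ label v)
    (hax2 : ∀ u' u v' v : Fin n, E u' u → E v' v → label u = label v → u < v → u' < v')
    {α β : ℕ → A} {u v : Fin n} (huv : u < v)
    (hα : Readable label E α u) (hβ : Readable label E β v) : seqLe α β := by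
  by_cases h : α = β
  · exact Or.inl h
  · obtain hfind := Nat.find_spec (Function.ne_iff.mp h)
    refine Or.inr ⟨Nat.find (Function.ne_iff.mp h), fun m hm => ?_, ?_⟩
    · have := Nat.find_min (Function.ne_iff.mp h) hm
      simpa using this
    · refine lt_of_le_of_ne ?_ hfind
      exact readable_keyA label E hax1 hax2 _ α β u v huv hα hβ
        (fun m hm => by simpa using Nat.find_min (Function.ne_iff.mp h) hm)

end Read

/-- in a Wheeler DFA (0-based states; the paper's 1-based LCP array
entry `LCP_A[2p]` is `f (2*i+2)` for `i = p-1`, `LCP_A[2p-1]` is `f (2*i+1)`),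
for every state `i`, letting `k = p_min(i)` and `k' = p_max(i)`: `k ≤ k'` and
`lcp(min_i, max_i) = 1 + min{ LCP_A[2k], …, LCP_A[2k'] }` (1-based indices),
i.e. `1 +` the infimum of `f` over `[2k+2, 2k'+2]` in 0-based indexing. -/
theorem lcp_even_recursion {n : ℕ} {A : Type*} [LinearOrder A]
    (label : Fin n → A) (E : Fin n → Fin n → Prop)
    (hdet : ∀ u v w : Fin n, E u v → E u w → label v = label w → v = w)
    (hax1 : ∀ u v : Fin n, u < v → label u ≤ label v)
    (hax2 : ∀ u' u v' v : Fin n, E u' u → E v' v → label u = label v → u < v → u' < v')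
    (hin : ∀ v : Fin n, ∃ u, E u v)
    (mn mx : Fin n → ℕ → A)
    (hmn : ∀ i, Readable label E (mn i) i ∧ ∀ α, Readable label E α i → seqLe (mn i) α)
    (hmx : ∀ i, Readable label E (mx i) i ∧ ∀ α, Readable label E α i → seqLe α (mx i))
    (pmin pmax : Fin n → Fin n)
    (hpmin : ∀ i : Fin n, E (pmin i) i ∧ ∀ j, E j i → pmin i ≤ j)
    (hpmax : ∀ i : Fin n, E (pmax i) i ∧ ∀ j, E j i → j ≤ pmax i)
    (f : ℕ → ℕ∞)
    (hfe : ∀ i : Fin n, f (2 * (i : ℕ) + 2) = seqLcp (mn i) (mx i))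
    (hfo : ∀ i j : Fin n, (j : ℕ) + 1 = (i : ℕ) → f (2 * (i : ℕ) + 1) = seqLcp (mx j) (mn i))
    (i : Fin n) :
    pmin i ≤ pmax i ∧
    seqLcp (mn i) (mx i) =
      1 + (Finset.Icc (2 * (pmin i : ℕ) + 2) (2 * (pmax i : ℕ) + 2)).inf f := by
  obtain ⟨hEk, hkmin⟩ := hpmin i
  obtain ⟨hEk', hkmax⟩ := hpmax i
  have hkk' : pmin i ≤ pmax i := hkmax _ hEk
  refine ⟨hkk', ?_⟩
  set k := pmin i with hk
  set k' := pmax i with hk'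
  -- the tail of mn i is mn k
  have htailmn : (fun m => mn i (m + 1)) = mn k := by
    obtain ⟨j, hEj, hR⟩ := readable_tail label E (hmn i).1
    have h1 : seqLe (mn k) (fun m => mn i (m + 1)) := by
      rcases eq_or_lt_of_le (hkmin j hEj) with heq | hlt
      · exact (hmn k).2 _ (heq ▸ hR)
      · exact readable_lt_seqLe label E hax1 hax2 hlt (hmn k).1 hR
    have h2 : seqLe (fun m => mn i (m + 1)) (mn k) := by
      have hcons := readable_cons label E hEk (hmn k).1
      have hle := (hmn i).2 _ hcons
      have h0 : mn i 0 = (fun m => Nat.casesOn m (label i) (mn k)) 0 :=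
        readable_head label E (hmn i).1
      exact seqLe_tail hle h0
    exact seqLe_antisymm h2 h1
  -- the tail of mx i is mx k'
  have htailmx : (fun m => mx i (m + 1)) = mx k' := by
    obtain ⟨j, hEj, hR⟩ := readable_tail label E (hmx i).1
    have h1 : seqLe (mx k') (fun m => mx i (m + 1)) := by
      have hcons := readable_cons label E hEk' (hmx k').1
      have hle := (hmx i).2 _ hcons
      have h0 : (fun m => Nat.casesOn m (label i) (mx k')) 0 = mx i 0 :=
        (readable_head label E (hmx i).1).symm
      exact seqLe_tail hle h0
    have h2 : seqLe (fun m => mx i (m + 1)) (mx k') := by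
      rcases eq_or_lt_of_le (hkmax j hEj) with heq | hlt
      · exact (hmx k').2 _ (heq ▸ hR)
      · exact readable_lt_seqLe label E hax1 hax2 hlt hR (hmx k').1
    exact seqLe_antisymm h2 h1
  have hhead : mn i 0 = mx i 0 := by
    rw [readable_head label E (hmn i).1, readable_head label E (hmx i).1]
  rw [seqLcp_succ hhead, htailmn, htailmx]
  congr 1
  set K := (k : ℕ) with hK
  set K' := (k' : ℕ) with hK'
  have hKK : K ≤ K' := hkk'
  set d := K' - K with hd
  have hstex : ∀ s, s ≤ d → K + s < n := fun s hs => lt_of_le_of_lt (by omega) k'.isLt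
  set st : ℕ → Fin n := fun s => if h : K + s < n then ⟨K + s, h⟩ else i with hstdef
  have hstv : ∀ s, s ≤ d → ((st s : ℕ)) = K + s := by
    intro s hs
    simp [hstdef, hstex s hs]
  have hst0 : st 0 = k := Fin.ext (by rw [hstv 0 (Nat.zero_le d)]; omega)
  have hstd : st d = k' := Fin.ext (by rw [hstv d le_rfl]; omega)
  set c : ℕ → ℕ → A := fun t => if t % 2 = 0 then mn (st (t / 2)) else mx (st (t / 2))
    with hcdef
  have hceven : ∀ t s, t = s + s → c t = mn (st s) ∧ c (t + 1) = mx (st s) := by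
    intro t s hs
    constructor
    · rw [hcdef]
      simp only []
      rw [if_pos (by omega : t % 2 = 0), (by omega : t / 2 = s)]
    · rw [hcdef]
      simp only []
      rw [if_neg (by omega : ¬ (t + 1) % 2 = 0), (by omega : (t + 1) / 2 = s)]
  have hcodd : ∀ t s, t = 2 * s + 1 → c t = mx (st s) ∧ c (t + 1) = mn (st (s + 1)) := by
    intro t s hs
    constructor
    · rw [hcdef]
      simp only []
      rw [if_neg (by omega : ¬ t % 2 = 0), (by omega : t / 2 = s)]
    · rw [hcdef]
      simp only []
      rw [if_pos (by omega : (t + 1) % 2 = 0), (by omega : (t + 1) / 2 = s + 1)]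
  have hchain : ∀ t < 2 * d + 1, seqLe (c t) (c (t + 1)) := by
    intro t ht
    rcases Nat.even_or_odd t with ⟨s, hs⟩ | ⟨s, hs⟩
    · obtain ⟨e1, e2⟩ := hceven t s hs
      rw [e1, e2]
      exact (hmn (st s)).2 _ (hmx (st s)).1
    · obtain ⟨e1, e2⟩ := hcodd t s hs
      have hlt : st s < st (s + 1) := by
        rw [Fin.lt_def, hstv s (by omega), hstv (s + 1) (by omega)]
        omega
      rw [e1, e2]
      exact readable_lt_seqLe label E hax1 hax2 hlt (hmx _).1 (hmn _).1
  have hmain := seqLcp_chain c (2 * d + 1) (by omega) hchain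
  have hc0 : c 0 = mn k := by
    obtain ⟨e1, _⟩ := hceven 0 0 rfl
    rw [e1, hst0]
  have hcM : c (2 * d + 1) = mx k' := by
    obtain ⟨e1, _⟩ := hcodd (2 * d + 1) d rfl
    rw [e1, hstd]
  rw [hc0, hcM] at hmain
  rw [hmain]
  have hval : ∀ t < 2 * d + 1, seqLcp (c t) (c (t + 1)) = f (2 * K + 2 + t) := by
    intro t ht
    rcases Nat.even_or_odd t with ⟨s, hs⟩ | ⟨s, hs⟩
    · obtain ⟨e1, e2⟩ := hceven t s hs
      rw [e1, e2, ← hfe (st s)]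
      congr 1
      rw [hstv s (by omega)]
      omega
    · obtain ⟨e1, e2⟩ := hcodd t s hs
      have harg : ((st s : ℕ)) + 1 = ((st (s + 1) : ℕ)) := by
        rw [hstv s (by omega), hstv (s + 1) (by omega)]
        omega
      rw [e1, e2, ← hfo (st (s + 1)) (st s) harg]
      congr 1
      rw [hstv (s + 1) (by omega)]
      omega
  apply le_antisymm
  · apply Finset.le_inf
    intro m hmem
    rw [Finset.mem_Icc] at hmem
    have ht : m - (2 * K + 2) < 2 * d + 1 := by omega
    have hv := hval (m - (2 * K + 2)) ht
    rw [(by omega : 2 * K + 2 + (m - (2 * K + 2)) = m)] at hv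
    calc ((Finset.range (2 * d + 1)).inf fun t => seqLcp (c t) (c (t + 1)))
        ≤ seqLcp (c (m - (2 * K + 2))) (c (m - (2 * K + 2) + 1)) :=
          Finset.inf_le (Finset.mem_range.mpr ht)
      _ = f m := hv
  · apply Finset.le_inf
    intro t hmem
    rw [Finset.mem_range] at hmem
    rw [hval t hmem]
    apply Finset.inf_le
    rw [Finset.mem_Icc]
    omega
end

section
/- Let α ∈ Σ* be a string of length m and let A' be the path DFA of α with states q'₀, q'₁, ..., q'_m, where λ(q'_i) is the i-th character of α and edges are (q'_{i−1}, q'_i). Then a total order ≤ on the states is a Wheeler order for A' if and only if for all i < j (as positions), q'_i < q'_j in ≤ exactly when the reversed prefix (α₁...α_i)^R is lexicographically smaller than (α₁...α_j)^R, with ties broken consistently; in particular A' is a Wheeler DFA and its Wheeler order coincides with the prefix array (suffix array of α^R) order when all reversed prefixes are distinct. -/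
/-- The reversed prefix of length `q` of the string `α` (of length `m`),
padded with copies of the smallest character `⊥` (playing the role of `#`). -/
def revPref {m : ℕ} {A : Type*} (α : Fin m → A) (q : Fin (m + 1)) : ℕ → WithBot A :=
  fun t => if h : t < (q : ℕ) then (α ⟨(q : ℕ) - 1 - t, by omega⟩ : WithBot A) else ⊥

/-- The incoming label of state `q` of the path DFA of `α`: `#` (i.e. `⊥`) for the
initial state `q = 0`, and the `q`-th character of `α` otherwise. -/
def pathLabel {m : ℕ} {A : Type*} (α : Fin m → A) (q : Fin (m + 1)) : WithBot A :=
  if h : (q : ℕ) = 0 then ⊥ else (α ⟨(q : ℕ) - 1, by omega⟩ : WithBot A)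

/-- The edges of the path DFA of `α`: `(q'_{i-1}, q'_i)`. -/
def pathEdge {m : ℕ} (p q : Fin (m + 1)) : Prop := (p : ℕ) + 1 = (q : ℕ)

/-- strict lexicographic order -/
def lexLt {B : Type*} [LinearOrder B] (α β : ℕ → B) : Prop :=
  ∃ n, (∀ t < n, α t = β t) ∧ α n < β n

lemma lexLt_asymm {B : Type*} [LinearOrder B] {α β : ℕ → B}
    (h : lexLt α β) (h' : lexLt β α) : False := by
  obtain ⟨n, hn, hlt⟩ := h
  obtain ⟨n', hn', hlt'⟩ := h'
  rcases lt_trichotomy n n' with hc | hc | hc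
  · rw [hn' n hc] at hlt; exact lt_irrefl _ hlt
  · subst hc; exact lt_irrefl _ (hlt.trans hlt')
  · rw [hn n' hc] at hlt'; exact lt_irrefl _ hlt'

lemma lexLt_iff {B : Type*} [LinearOrder B] (α β : ℕ → B) :
    (seqLe α β ∧ α ≠ β) ↔ lexLt α β := by
  constructor
  · rintro ⟨h | h, hne⟩
    · exact absurd h hne
    · exact h
  · rintro ⟨n, hn, hlt⟩
    exact ⟨Or.inr ⟨n, hn, hlt⟩, fun h => absurd (congrFun h n) (ne_of_lt hlt)⟩

lemma revPref_zero_eq {m : ℕ} {A : Type*} [LinearOrder A] (α : Fin m → A) (p : Fin (m + 1)) :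
    revPref α p 0 = pathLabel α p := by
  unfold revPref pathLabel
  rcases Nat.eq_zero_or_pos (p : ℕ) with h | h
  · simp [h]
  · rw [dif_pos h, dif_neg (by omega)]
    exact congrArg _ (congrArg α (Fin.ext (by simp)))

lemma revPref_succ {m : ℕ} {A : Type*} [LinearOrder A] (α : Fin m → A) {p' p : Fin (m + 1)}
    (h : (p' : ℕ) + 1 = (p : ℕ)) (t : ℕ) :
    revPref α p (t + 1) = revPref α p' t := by
  unfold revPref
  by_cases ht : t < (p' : ℕ)
  · rw [dif_pos (by omega), dif_pos ht]
    exact congrArg _ (congrArg α (Fin.ext (by simp; omega)))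
  · rw [dif_neg (by omega), dif_neg ht]

lemma lex_zero {m : ℕ} {A : Type*} [LinearOrder A] (α : Fin m → A) {q : Fin (m + 1)}
    (hq : (q : ℕ) ≠ 0) : lexLt (revPref α (0 : Fin (m+1))) (revPref α q) := by
  refine ⟨0, fun t ht => absurd ht (Nat.not_lt_zero t), ?_⟩
  unfold revPref
  rw [dif_neg (by simp), dif_pos (by omega)]
  exact WithBot.bot_lt_coe _

/-- a total order `le` on the states of the path DFA of a string `α`
is a Wheeler order iff its strict part compares states exactly as the lexicographic
order on the corresponding reversed prefixes (padded with `#^ω`); in particular the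
path DFA is Wheeler and its Wheeler order is the prefix-array order of `α`
(equivalently, the suffix-array order of `α^R`). -/
theorem path_dfa_wheeler_iff {m : ℕ} {A : Type*} [LinearOrder A]
    (α : Fin m → A) (le : Fin (m + 1) → Fin (m + 1) → Prop)
    (hlin : IsLinearOrder (Fin (m + 1)) le) :
    ((∀ q, le 0 q) ∧
     (∀ p q, le p q → ¬ le q p → pathLabel α p ≤ pathLabel α q) ∧
     (∀ p' p q' q, pathEdge p' p → pathEdge q' q → pathLabel α p = pathLabel α q →
        (le p q ∧ ¬ le q p) → (le p' q' ∧ ¬ le q' p'))) ↔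
    (∀ p q : Fin (m + 1), (le p q ∧ ¬ le q p) ↔
      (seqLe (revPref α p) (revPref α q) ∧ revPref α p ≠ revPref α q)) := by
  haveI := hlin
  constructor
  · rintro ⟨H1, H2, H3⟩
    -- key: lt p q → lexLt
    have key : ∀ k (p q : Fin (m + 1)), (p : ℕ) ≤ k → le p q → ¬ le q p →
        lexLt (revPref α p) (revPref α q) := by
      intro k
      induction k with
      | zero =>
        intro p q hp hle hnle
        have hp0 : p = 0 := Fin.ext (by simp only [Fin.val_zero]; omega)
        subst hp0
        have hq0 : (q : ℕ) ≠ 0 := by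
          intro h
          have : q = 0 := Fin.ext (by simp only [Fin.val_zero]; exact h)
          subst this
          exact hnle hle
        exact lex_zero α hq0
      | succ k ih =>
        intro p q hp hle hnle
        by_cases hp0 : (p : ℕ) = 0
        · have : p = 0 := Fin.ext (by simp only [Fin.val_zero]; omega)
          subst this
          have hq0 : (q : ℕ) ≠ 0 := by
            intro h
            have : q = 0 := Fin.ext (by simp only [Fin.val_zero]; exact h)
            subst this
            exact hnle hle
          exact lex_zero α hq0
        · have hq0 : (q : ℕ) ≠ 0 := by
            intro h
            have : q = 0 := Fin.ext (by simp only [Fin.val_zero]; exact h)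
            subst this
            exact hnle (H1 p)
          set p' : Fin (m + 1) := ⟨(p : ℕ) - 1, by omega⟩ with hp'
          set q' : Fin (m + 1) := ⟨(q : ℕ) - 1, by omega⟩ with hq'
          have hep : pathEdge p' p := by simp [pathEdge, hp']; omega
          have heq : pathEdge q' q := by simp [pathEdge, hq']; omega
          have hlab : pathLabel α p ≤ pathLabel α q := H2 p q hle hnle
          rcases lt_or_eq_of_le hlab with hlt | heqlab
          · exact ⟨0, fun t ht => absurd ht (Nat.not_lt_zero t),
              by rw [revPref_zero_eq, revPref_zero_eq]; exact hlt⟩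
          · obtain ⟨hle', hnle'⟩ := H3 p' p q' q hep heq heqlab ⟨hle, hnle⟩
            obtain ⟨n, hn, hlt⟩ := ih p' q' (by simp [hp']; omega) hle' hnle'
            refine ⟨n + 1, ?_, ?_⟩
            · intro t ht
              match t with
              | 0 => rw [revPref_zero_eq, revPref_zero_eq, heqlab]
              | (s + 1) =>
                rw [revPref_succ α hep, revPref_succ α heq]
                exact hn s (by omega)
            · rw [show n + 1 = n + 1 from rfl, revPref_succ α hep, revPref_succ α heq]
              exact hlt
    intro p q
    rw [lexLt_iff]
    constructor
    · intro ⟨hle, hnle⟩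
      exact key (p : ℕ) p q le_rfl hle hnle
    · intro hl
      by_cases hqp : le q p
      · by_cases hpq : le p q
        · have : p = q := Std.Antisymm.antisymm (r := le) p q hpq hqp
          subst this
          obtain ⟨n, hn, hlt⟩ := hl
          exact absurd hlt (lt_irrefl _)
        · have : le q p ∧ ¬ le p q := ⟨hqp, hpq⟩
          have := key (q : ℕ) q p le_rfl hqp hpq
          exact absurd hl (fun h => lexLt_asymm h this)
      · rcases Std.Total.total (r := le) p q with h | h
        · exact ⟨h, hqp⟩
        · exact absurd h hqp
  · intro H
    refine ⟨?_, ?_, ?_⟩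
    · intro q
      by_cases hq : (q : ℕ) = 0
      · have : q = 0 := Fin.ext (by simp only [Fin.val_zero]; exact hq)
        subst this
        exact Std.Refl.refl (r := le) 0
      · exact ((H 0 q).2 ((lexLt_iff _ _).2 (lex_zero α hq))).1
    · intro p q hle hnle
      have hl := (lexLt_iff _ _).1 ((H p q).1 ⟨hle, hnle⟩)
      obtain ⟨n, hn, hlt⟩ := hl
      match n with
      | 0 =>
        rw [revPref_zero_eq, revPref_zero_eq] at hlt
        exact hlt.le
      | (s + 1) =>
        have := hn 0 (by omega)
        rw [revPref_zero_eq, revPref_zero_eq] at this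
        exact this.le
    · intro p' p q' q hep heq hlab ⟨hle, hnle⟩
      have hl := (lexLt_iff _ _).1 ((H p q).1 ⟨hle, hnle⟩)
      obtain ⟨n, hn, hlt⟩ := hl
      match n with
      | 0 =>
        rw [revPref_zero_eq, revPref_zero_eq] at hlt
        rw [hlab] at hlt
        exact absurd hlt (lt_irrefl _)
      | (s + 1) =>
        apply (H p' q').2
        apply (lexLt_iff _ _).2
        refine ⟨s, fun t ht => ?_, ?_⟩
        · have := hn (t + 1) (by omega)
          rwa [revPref_succ α hep, revPref_succ α heq] at this
        · rw [revPref_succ α hep, revPref_succ α heq] at hlt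
          exact hlt
end
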